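/- Let L be a finite dismantlable lattice that is not a chain, let (a, b) be an adjunct pair of L, and let C be a finite nonempty chain disjoint from L. Then Dim(L ]ᵇₐ C) = Dim(L). -/

import Mathlib

/-- A family of `t` relations is a *realizer* of the relation `le`:
each member is a linear order (on the whole ground set) and their
intersection is exactly `le`.  (In particular each member extends `le`.) -/
def IsRealizer {α : Type*} (le : α → α → Prop) {t : ℕ}
    (R : Fin t → α → α → Prop) : Prop :=
  (∀ i, IsLinearOrder α (R i)) ∧ ∀ x y, le x y ↔ ∀ i, R i x y

/-- The Dushnik–Miller order dimension of the relation `le`: the least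
positive number `t` of linear extensions whose intersection is `le`. -/
noncomputable def orderDim {α : Type*} (le : α → α → Prop) : ℕ :=
  sInf {t | 0 < t ∧ ∃ R : Fin t → α → α → Prop, IsRealizer le R}

/-- An element of a poset is doubly irreducible if it has at most one lower
cover and at most one upper cover. -/
def DoublyIrreducible {α : Type*} [PartialOrder α] (z : α) : Prop :=
  {w | w ⋖ z}.Subsingleton ∧ {w | z ⋖ w}.Subsingleton

/-- An element is reducible if it is not doubly irreducible. -/
def Reducible {α : Type*} [PartialOrder α] (z : α) : Prop :=
  ¬ DoublyIrreducible z

/-- A lattice is an RC-lattice if any two of its reducible elements are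
comparable. -/
def IsRCLattice (α : Type*) [Lattice α] : Prop :=
  ∀ x y : α, Reducible x → Reducible y → (x ≤ y ∨ y ≤ x)


/-- The ground set of the complete fundamental basic block `L_r`:
the chain `A₁ ≺ x₁ ≺ A₂ ≺ ⋯ ≺ x_{r-1} ≺ A_r` (of length `2r-1`,
`A_{i+1}` sitting at position `2i`, `x_{i+1}` at position `2i+1`),
together with the doubly irreducible elements `c_{ij}` for `1 ≤ i < j ≤ r`. -/
def Lr (r : ℕ) : Type :=
  Fin (2 * r - 1) ⊕ {p : Fin r × Fin r // (p.1 : ℕ) < (p.2 : ℕ)}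

namespace Lr

/-- The order of `L_r`: on the chain it is the usual order; `z ≤ c_{ij}` iff
`z ≤ A_i`; `c_{ij} ≤ z` iff `A_j ≤ z`; `c_{ij} ≤ c_{kl}` iff `(i,j) = (k,l)`
or `j ≤ k`. -/
def le {r : ℕ} (x y : Lr r) : Prop :=
  match x, y with
  | Sum.inl k, Sum.inl k' => (k : ℕ) ≤ (k' : ℕ)
  | Sum.inl k, Sum.inr c => (k : ℕ) ≤ 2 * (c.1.1 : ℕ)
  | Sum.inr c, Sum.inl k => 2 * (c.1.2 : ℕ) ≤ (k : ℕ)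
  | Sum.inr c, Sum.inr c' =>
      ((c.1.1 : ℕ) = (c'.1.1 : ℕ) ∧ (c.1.2 : ℕ) = (c'.1.2 : ℕ)) ∨
        (c.1.2 : ℕ) ≤ (c'.1.1 : ℕ)

instance (r : ℕ) : PartialOrder (Lr r) where
  le := le
  le_refl x := by rcases x with k | ⟨p, hp⟩ <;> simp [le]
  le_trans x y z hxy hyz := by
    rcases x with k | ⟨p, hp⟩ <;> rcases y with k' | ⟨q, hq⟩ <;>
      rcases z with k'' | ⟨t, ht⟩ <;>
      simp only [le] at hxy hyz ⊢ <;> omega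
  le_antisymm x y hxy hyx := by
    rcases x with k | ⟨p, hp⟩ <;> rcases y with k' | ⟨q, hq⟩ <;>
      simp only [le] at hxy hyx
    · exact congrArg Sum.inl (Fin.ext (by omega))
    · omega
    · omega
    · have h1 : (p.1 : ℕ) = (q.1 : ℕ) := by omega
      have h2 : (p.2 : ℕ) = (q.2 : ℕ) := by omega
      exact congrArg Sum.inr (Subtype.ext (Prod.ext (Fin.ext h1) (Fin.ext h2)))

/-- The reducible element `A_{i+1}` of `L_r` (`i` is 0-based). -/
def A {r : ℕ} (i : Fin r) : Lr r :=
  Sum.inl ⟨2 * (i : ℕ), by have := i.2; omega⟩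

/-- The doubly irreducible chain element `x_{i+1}` of `L_r` (`i` is 0-based). -/
def X {r : ℕ} (i : Fin (r - 1)) : Lr r :=
  Sum.inl ⟨2 * (i : ℕ) + 1, by have := i.2; omega⟩

/-- The doubly irreducible element `c_{(i+1)(j+1)}` of `L_r`
(`i`, `j` are 0-based). -/
def c {r : ℕ} (i j : Fin r) (h : (i : ℕ) < (j : ℕ)) : Lr r :=
  Sum.inr ⟨(i, j), h⟩

end Lr


/-- The adjunct order `L₁ ]ᵇₐ L₂` on the disjoint union of two ordered sets
(with respect to the pair `a < b` of the first one):
`x ≤ y` iff both lie in `L₁` and `x ≤ y` there, or both lie in `L₂` and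
`x ≤ y` there, or `x ∈ L₁`, `y ∈ L₂` and `x ≤ a`, or `x ∈ L₂`, `y ∈ L₁`
and `b ≤ y`. -/
def adjunctLE {α β : Type*} [LE α] [LE β] (a b : α) :
    α ⊕ β → α ⊕ β → Prop
  | Sum.inl x, Sum.inl y => x ≤ y
  | Sum.inl x, Sum.inr _ => x ≤ a
  | Sum.inr _, Sum.inl y => b ≤ y
  | Sum.inr x, Sum.inr y => x ≤ y

/-- A subset of a lattice is a sublattice if it is closed under `⊔` and `⊓`. -/
def IsSublatticeSet {α : Type*} [Lattice α] (S : Set α) : Prop :=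
  ∀ ⦃x⦄, x ∈ S → ∀ ⦃y⦄, y ∈ S → x ⊔ y ∈ S ∧ x ⊓ y ∈ S

/-- A finite lattice on `n` elements is dismantlable if there is a chain
`L₁ ⊆ L₂ ⊆ ⋯ ⊆ Lₙ` of sublattices with `|Lᵢ| = i` exhausting the lattice. -/
def Dismantlable (α : Type*) [Lattice α] : Prop :=
  ∃ S : Fin (Nat.card α) → Set α,
    (∀ i, IsSublatticeSet (S i)) ∧
    (∀ i j, i ≤ j → S i ⊆ S j) ∧
    (∀ i, Nat.card (S i) = (i : ℕ) + 1) ∧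
    (∀ x : α, ∃ i, x ∈ S i)

/-- The cover graph of a poset: `x` and `y` are adjacent iff one covers the
other. -/
def coverGraph (α : Type*) [PartialOrder α] : SimpleGraph α where
  Adj x y := x ⋖ y ∨ y ⋖ x
  symm := ⟨fun x y h => h.symm⟩
  loopless := ⟨fun x h => by rcases h with h | h <;> exact lt_irrefl x h.lt⟩

/-- The nullity of a poset: (number of covering pairs) − (number of elements)
+ (number of connected components of the cover graph). -/
noncomputable def nullity (α : Type*) [PartialOrder α] : ℤ :=
  (Nat.card {p : α × α // p.1 ⋖ p.2} : ℤ) - (Nat.card α : ℤ) +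
    (Nat.card (coverGraph α).ConnectedComponent : ℤ)

/-- `(a, b)` is an adjunct pair of the lattice `α`: `a < b` and `α` can be
partitioned into nonempty sublattices `K` and `M` with `a, b ∈ K`, `b` not
covering `a` within `K`, such that for `x ∈ K`, `y ∈ M`: `x ≤ y ↔ x ≤ a`
and `y ≤ x ↔ b ≤ x`. -/
def IsAdjunctPair {α : Type*} [Lattice α] (a b : α) : Prop :=
  a < b ∧ ∃ K M : Set α, K.Nonempty ∧ M.Nonempty ∧ Disjoint K M ∧
    K ∪ M = Set.univ ∧ IsSublatticeSet K ∧ IsSublatticeSet M ∧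
    a ∈ K ∧ b ∈ K ∧ (∃ z ∈ K, a < z ∧ z < b) ∧
    ∀ x ∈ K, ∀ y ∈ M, (x ≤ y ↔ x ≤ a) ∧ (y ≤ x ↔ b ≤ x)

/-- `s` is the least upper bound of `x` and `y` with respect to the
relation `le`. -/
def IsLUBRel {γ : Type*} (le : γ → γ → Prop) (x y s : γ) : Prop :=
  le x s ∧ le y s ∧ ∀ z, le x z → le y z → le s z

/-- `s` is the greatest lower bound of `x` and `y` with respect to the
relation `le`. -/
def IsGLBRel {γ : Type*} (le : γ → γ → Prop) (x y s : γ) : Prop :=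
  le s x ∧ le s y ∧ ∀ z, le z x → le z y → le z s

/-- `y` covers `x` with respect to the relation `le`. -/
def RelCovBy {γ : Type*} (le : γ → γ → Prop) (x y : γ) : Prop :=
  le x y ∧ x ≠ y ∧ ∀ z, le x z → le z y → z = x ∨ z = y

/-! Write `α = L₁ ]ᵇₐ M`. Each linear extension of a realizer of `α` is modified so that `M` becomes
an interval, by collapsing `M` onto one of its points and breaking ties by the old order. The chain
is then inserted into every extension at a cut next to that interval: just below it in one
extension, just above it in all the others. Since `α` is not a chain whenever it has an adjunct
pair, a realizer has at least two extensions, so both cuts occur, and they cut out exactly the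
comparabilities of the adjunct. Conversely a realizer of the adjunct restricts to one of `α`. -/

open Function

section Realizer

variable {α γ δ : Type*}

theorem orderDim_eq_of_forall_exists_isRealizer_iff {le : α → α → Prop}
    {le' : γ → γ → Prop}
    (h : ∀ t, (∃ R : Fin t → α → α → Prop, IsRealizer le R) ↔
      ∃ R : Fin t → γ → γ → Prop, IsRealizer le' R) :
    orderDim le = orderDim le' := by
  simp only [orderDim, h]

theorem IsRealizer.one_lt {le : α → α → Prop} {t : ℕ} {R : Fin t → α → α → Prop}
    (hR : IsRealizer le R) {x y : α} (hxy : ¬ le x y) (hyx : ¬ le y x) : 1 < t := by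
  by_contra! ht
  have : Subsingleton (Fin t) := Fin.subsingleton_iff_le_one.mpr ht
  obtain ⟨i, hi⟩ := not_forall.mp ((hR.2 x y).not.mp hxy)
  obtain ⟨j, hj⟩ := not_forall.mp ((hR.2 y x).not.mp hyx)
  rcases (hR.1 i).total x y with h | h
  · exact hi h
  · exact hj (Subsingleton.elim i j ▸ h)

theorem IsRealizer.comap {le : γ → γ → Prop} {t : ℕ} {R : Fin t → γ → γ → Prop}
    (hR : IsRealizer le R) {f : α → γ} (hf : Injective f) :
    IsRealizer (fun x y => le (f x) (f y)) (fun i x y => R i (f x) (f y)) :=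
  ⟨fun i =>
    { refl := fun x => (hR.1 i).refl (f x)
      trans := fun _ _ _ => (hR.1 i).trans _ _ _
      antisymm := fun _ _ hxy hyx => hf ((hR.1 i).antisymm _ _ hxy hyx)
      total := fun x y => (hR.1 i).total (f x) (f y) },
    fun x y => hR.2 (f x) (f y)⟩

def lexComap (r : δ → δ → Prop) (f : α → δ) (s : α → α → Prop) (x y : α) : Prop :=
  r (f x) (f y) ∧ (f x = f y → s x y)

theorem isLinearOrder_lexComap {r : δ → δ → Prop} {s : α → α → Prop}
    (hr : IsLinearOrder δ r) (hs : IsLinearOrder α s) (f : α → δ) :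
    IsLinearOrder α (lexComap r f s) where
  refl x := ⟨hr.refl _, fun _ => hs.refl x⟩
  trans x y z := by
    rintro ⟨hxy, hxy'⟩ ⟨hyz, hyz'⟩
    refine ⟨hr.trans _ _ _ hxy hyz, fun hxz => ?_⟩
    have hfxy : f x = f y := hr.antisymm _ _ hxy (hxz ▸ hyz)
    exact hs.trans _ _ _ (hxy' hfxy) (hyz' (hfxy ▸ hxz))
  antisymm x y := by
    rintro ⟨hxy, hxy'⟩ ⟨hyx, hyx'⟩
    have hfxy : f x = f y := hr.antisymm _ _ hxy hyx
    exact hs.antisymm _ _ (hxy' hfxy) (hyx' hfxy.symm)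
  total x y := by
    by_cases hfxy : f x = f y
    · rw [lexComap, lexComap, hfxy]
      exact (hs.total x y).imp (⟨hr.refl _, fun _ => ·⟩) (⟨hr.refl _, fun _ => ·⟩)
    · exact (hr.total (f x) (f y)).imp (⟨·, fun h => absurd h hfxy⟩)
        (⟨·, fun h => absurd h.symm hfxy⟩)

theorem IsRealizer.lexComap [Preorder α] {t : ℕ} {R : Fin t → α → α → Prop}
    (hR : IsRealizer (· ≤ ·) R) {f : α → α}
    (hf : ∀ x y, x ≤ y ↔ f x ≤ f y ∧ (f x = f y → x ≤ y)) :
    IsRealizer (· ≤ ·) (fun i => _root_.lexComap (R i) f (R i)) := by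
  refine ⟨fun i => isLinearOrder_lexComap (hR.1 i) (hR.1 i) f, fun x y => ?_⟩
  change x ≤ y ↔ ∀ i, _root_.lexComap (R i) f (R i) x y
  rw [hf]
  refine (and_congr (hR.2 _ _) (imp_congr_right fun _ => hR.2 x y)).trans ?_
  simp only [_root_.lexComap, forall_and, imp_forall_iff]

end Realizer

section Adjunct

variable {α β : Type*}

def insertAtCut [LE β] (S : α → α → Prop) (P : α → Prop) : α ⊕ β → α ⊕ β → Prop
  | Sum.inl x, Sum.inl y => S x y
  | Sum.inl x, Sum.inr _ => P x
  | Sum.inr _, Sum.inl y => ¬ P y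
  | Sum.inr c, Sum.inr c' => c ≤ c'

theorem isLinearOrder_insertAtCut [LinearOrder β] {S : α → α → Prop} {P : α → Prop}
    (hS : IsLinearOrder α S) (hP : ∀ x y, S x y → P y → P x) :
    IsLinearOrder (α ⊕ β) (insertAtCut S P) where
  refl := by
    rintro (x | c)
    · exact hS.refl x
    · exact le_refl c
  trans := by
    rintro (x | c) (y | d) (z | e) h₁ h₂
    · exact hS.trans x y z h₁ h₂
    · exact hP x y h₁ h₂
    · exact (hS.total x z).resolve_right fun h => h₂ (hP z x h h₁)
    · exact h₁
    · exact fun h => h₁ (hP y z h₂ h)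
    · exact absurd h₂ h₁
    · exact h₂
    · exact le_trans (α := β) h₁ h₂
  antisymm := by
    rintro (x | c) (y | d) h₁ h₂
    · exact congrArg Sum.inl (hS.antisymm x y h₁ h₂)
    · exact absurd h₁ h₂
    · exact absurd h₂ h₁
    · exact congrArg Sum.inr (le_antisymm (α := β) h₁ h₂)
  total := by
    rintro (x | c) (y | d)
    · exact hS.total x y
    · exact em (P x)
    · exact (em (P y)).symm
    · exact le_total (α := β) c d

theorem IsRealizer.insertAtCut [LE α] [LinearOrder β] {a b : α} {t : ℕ} (ht : 0 < t)
    {S : Fin t → α → α → Prop} (hS : IsRealizer (· ≤ ·) S) {P : Fin t → α → Prop}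
    (hP : ∀ i x y, S i x y → P i y → P i x)
    (ha : ∀ x, x ≤ a ↔ ∀ i, P i x) (hb : ∀ y, b ≤ y ↔ ∀ i, ¬ P i y) :
    IsRealizer (adjunctLE (β := β) a b) (fun i => _root_.insertAtCut (S i) (P i)) := by
  refine ⟨fun i => isLinearOrder_insertAtCut (hS.1 i) (hP i), ?_⟩
  rintro (x | c) (y | e)
  · exact hS.2 x y
  · exact ha x
  · exact hb y
  · exact ⟨fun h _ => h, fun h => h ⟨0, ht⟩⟩

end Adjunct

section Collapse

variable {α : Type*}

open Classical in
noncomputable def collapseTo (M : Set α) (m₀ : α) (x : α) : α := if x ∈ M then m₀ else x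

theorem collapseTo_of_mem {M : Set α} {m₀ x : α} (hx : x ∈ M) : collapseTo M m₀ x = m₀ := by
  simp [collapseTo, hx]

theorem collapseTo_of_notMem {M : Set α} {m₀ x : α} (hx : x ∉ M) : collapseTo M m₀ x = x := by
  simp [collapseTo, hx]

/-- The cut of the `i`-th extension `R i` (with `M` collapsed onto `m₀`) at which the chain is
inserted: just above `m₀`, except for `i = 0`, where it is just below the whole block `M`. -/
def adjunctCut {t : ℕ} (R : Fin t → α → α → Prop) (M : Set α) (m₀ : α) (i : Fin t)
    (x : α) : Prop :=
  R i (collapseTo M m₀ x) m₀ ∧ ((i : ℕ) = 0 → x ∉ M)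

theorem adjunctCut_of_lexComap {t : ℕ} {R : Fin t → α → α → Prop}
    (hR : ∀ i, IsLinearOrder α (R i)) {M : Set α} {m₀ : α} (hm₀ : m₀ ∈ M) {i : Fin t}
    {x y : α} (hxy : lexComap (R i) (collapseTo M m₀) (R i) x y)
    (hy : adjunctCut R M m₀ i y) : adjunctCut R M m₀ i x := by
  refine ⟨(hR i).trans _ _ _ hxy.1 hy.1, fun hi hxM => ?_⟩
  have hyM : y ∉ M := hy.2 hi
  have hm₀y := hxy.1
  have hym₀ := hy.1
  rw [collapseTo_of_mem hxM, collapseTo_of_notMem hyM] at hm₀y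
  rw [collapseTo_of_notMem hyM] at hym₀
  exact hyM ((hR i).antisymm _ _ hym₀ hm₀y ▸ hm₀)

end Collapse

section Block

variable {α : Type*} [Preorder α] {a b m₀ : α} {M : Set α}

/-- `α = L₁ ]ᵇₐ M` with `L₁ = Mᶜ`. -/
structure IsAdjoinedBlock (a b : α) (M : Set α) : Prop where
  lt : a < b
  left_notMem : a ∉ M
  right_notMem : b ∉ M
  le_iff : ∀ x ∉ M, ∀ y ∈ M, x ≤ y ↔ x ≤ a
  ge_iff : ∀ x ∉ M, ∀ y ∈ M, y ≤ x ↔ b ≤ x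

theorem IsAdjunctPair.exists_isAdjoinedBlock {L : Type*} [Lattice L] {a b : L}
    (h : IsAdjunctPair a b) :
    ∃ M : Set L, IsAdjoinedBlock a b M ∧ M.Nonempty ∧ ∃ z ∉ M, a < z ∧ z < b := by
  obtain ⟨hab, K, M, -, hM, hKM, hunion, -, -, haK, hbK, ⟨z, hzK, haz, hzb⟩, hle⟩ := h
  have hK : ∀ x ∉ M, x ∈ K := fun x hx =>
    (Set.eq_univ_iff_forall.mp hunion x).resolve_right hx
  have hnotM : ∀ x ∈ K, x ∉ M := fun x hx => Set.disjoint_left.mp hKM hx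
  exact ⟨M, ⟨hab, hnotM a haK, hnotM b hbK, fun x hx y hy => (hle x (hK x hx) y hy).1,
    fun x hx y hy => (hle x (hK x hx) y hy).2⟩, hM, z, hnotM z hzK, haz, hzb⟩

namespace IsAdjoinedBlock

theorem not_le_left (hM : IsAdjoinedBlock a b M) (hm : m₀ ∈ M) : ¬ m₀ ≤ a :=
  fun h => hM.lt.not_ge ((hM.ge_iff a hM.left_notMem m₀ hm).mp h)

theorem not_right_le (hM : IsAdjoinedBlock a b M) (hm : m₀ ∈ M) : ¬ b ≤ m₀ :=
  fun h => hM.lt.not_ge ((hM.le_iff b hM.right_notMem m₀ hm).mp h)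

theorem not_le_and_not_ge_of_mem (hM : IsAdjoinedBlock a b M) (hm : m₀ ∈ M) {z : α} (hz : z ∉ M)
    (haz : a < z) (hzb : z < b) : ¬ z ≤ m₀ ∧ ¬ m₀ ≤ z :=
  ⟨fun h => haz.not_ge ((hM.le_iff z hz m₀ hm).mp h),
    fun h => hzb.not_ge ((hM.ge_iff z hz m₀ hm).mp h)⟩

theorem le_iff_collapse (hM : IsAdjoinedBlock a b M) (hm₀ : m₀ ∈ M) (x y : α) :
    x ≤ y ↔ collapseTo M m₀ x ≤ collapseTo M m₀ y ∧
      (collapseTo M m₀ x = collapseTo M m₀ y → x ≤ y) := by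
  by_cases hx : x ∈ M <;> by_cases hy : y ∈ M
  · simp [collapseTo_of_mem hx, collapseTo_of_mem hy]
  · have hne : m₀ ≠ y := fun h => hy (h ▸ hm₀)
    rw [collapseTo_of_mem hx, collapseTo_of_notMem hy, hM.ge_iff y hy x hx,
      ← hM.ge_iff y hy m₀ hm₀]
    simp [hne]
  · have hne : x ≠ m₀ := fun h => hx (h ▸ hm₀)
    rw [collapseTo_of_notMem hx, collapseTo_of_mem hy, hM.le_iff x hx y hy,
      ← hM.le_iff x hx m₀ hm₀]
    simp [hne]
  · simp +contextual [collapseTo_of_notMem hx, collapseTo_of_notMem hy]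

theorem le_left_iff_forall_adjunctCut (hM : IsAdjoinedBlock a b M) (hm₀ : m₀ ∈ M) {t : ℕ}
    (ht : 0 < t) {R : Fin t → α → α → Prop} (hR : IsRealizer (· ≤ ·) R) (x : α) :
    x ≤ a ↔ ∀ i, adjunctCut R M m₀ i x := by
  constructor
  · intro hxa i
    have hx : x ∉ M := fun hx => hM.not_le_left hx hxa
    refine ⟨?_, fun _ => hx⟩
    rw [collapseTo_of_notMem hx]
    exact (hR.2 x m₀).mp ((hM.le_iff x hx m₀ hm₀).mpr hxa) i
  · intro hcut
    have hx : x ∉ M := (hcut ⟨0, ht⟩).2 rfl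
    refine (hM.le_iff x hx m₀ hm₀).mp ((hR.2 x m₀).mpr fun i => ?_)
    simpa only [collapseTo_of_notMem hx] using (hcut i).1

theorem right_le_iff_forall_not_adjunctCut (hM : IsAdjoinedBlock a b M) (hm₀ : m₀ ∈ M)
    {t : ℕ} (ht : 1 < t) {R : Fin t → α → α → Prop} (hR : IsRealizer (· ≤ ·) R) (y : α) :
    b ≤ y ↔ ∀ i, ¬ adjunctCut R M m₀ i y := by
  constructor
  · rintro hby i ⟨hym₀, -⟩
    have hy : y ∉ M := fun hy => hM.not_right_le hy hby
    rw [collapseTo_of_notMem hy] at hym₀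
    have hm₀y : R i m₀ y := (hR.2 m₀ y).mp ((hM.ge_iff y hy m₀ hm₀).mpr hby) i
    exact hy ((hR.1 i).antisymm _ _ hym₀ hm₀y ▸ hm₀)
  · intro hcut
    have hy : y ∉ M := fun hy => hcut ⟨1, ht⟩
      ⟨collapseTo_of_mem hy ▸ (hR.1 _).refl m₀, fun h => absurd h one_ne_zero⟩
    refine (hM.ge_iff y hy m₀ hm₀).mp ((hR.2 m₀ y).mpr fun i => ?_)
    refine ((hR.1 i).total y m₀).resolve_left fun hym₀ => hcut i ⟨?_, fun _ => hy⟩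
    rwa [collapseTo_of_notMem hy]

theorem exists_isRealizer_adjunctLE (β : Type*) [LinearOrder β] (hM : IsAdjoinedBlock a b M)
    (hm₀ : m₀ ∈ M) {t : ℕ} (ht : 1 < t) {R : Fin t → α → α → Prop}
    (hR : IsRealizer (· ≤ ·) R) :
    ∃ Q : Fin t → α ⊕ β → α ⊕ β → Prop, IsRealizer (adjunctLE a b) Q :=
  ⟨_, (hR.lexComap (hM.le_iff_collapse hm₀)).insertAtCut (by omega)
    (fun _ _ _ hxy hy => adjunctCut_of_lexComap hR.1 hm₀ hxy hy)
    (hM.le_left_iff_forall_adjunctCut hm₀ (by omega) hR)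
    (hM.right_le_iff_forall_not_adjunctCut hm₀ ht hR)⟩

end IsAdjoinedBlock

end Block

theorem dim_adjunct_chain_at_adjunct_pair_general {α : Type*} [Lattice α]
    {β : Type*} [LinearOrder β]
    {a b : α} (hab : IsAdjunctPair a b) :
    orderDim (adjunctLE (α := α) (β := β) a b) =
      orderDim ((· ≤ ·) : α → α → Prop) := by
  obtain ⟨M, hM, ⟨m₀, hm₀⟩, z, hz, haz, hzb⟩ := hab.exists_isAdjoinedBlock
  obtain ⟨hzm₀, hm₀z⟩ := hM.not_le_and_not_ge_of_mem hm₀ hz haz hzb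
  refine orderDim_eq_of_forall_exists_isRealizer_iff fun t => ⟨?_, ?_⟩
  · rintro ⟨Q, hQ⟩
    exact ⟨_, hQ.comap Sum.inl_injective⟩
  · rintro ⟨R, hR⟩
    exact hM.exists_isRealizer_adjunctLE β hm₀ (hR.one_lt hzm₀ hm₀z) hR

/-- adjoining a finite nonempty chain to a finite dismantlable
lattice `L` (which is not a chain) along an adjunct pair `(a, b)` of `L`
does not change the order dimension. -/
theorem dim_adjunct_chain_at_adjunct_pair {α : Type*} [Lattice α] [Finite α]
    {β : Type*} [LinearOrder β] [Finite β] [Nonempty β]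
    (hd : Dismantlable α) (hnc : ¬ ∀ x y : α, x ≤ y ∨ y ≤ x)
    {a b : α} (hab : IsAdjunctPair a b) :
    orderDim (adjunctLE (α := α) (β := β) a b) =
      orderDim ((· ≤ ·) : α → α → Prop) :=
  dim_adjunct_chain_at_adjunct_pair_general hab
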